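/- arXiv:0705.2753 — 3 statements merged into one kernel-verified Lean document; each statement's English description precedes it below -/
import Mathlib

section
/- Let A and B be (ε,n)-separated subsets of X with A optimal (i.e., |A| = C_{ε,n}(X) is maximal among (ε,n)-separated sets). Then there exists an injective map α : B → A such that d_n(x, α(x)) < ε for every x ∈ B. Moreover if |B| = |A| then α is a bijection. -/
open Filter Topology

/-- The Bowen metric `d_n(x,y) = max_{0 ≤ i ≤ n-1} d(f^i x, f^i y)`. -/
noncomputable def dn {X : Type*} [PseudoMetricSpace X] (f : X → X) (n : ℕ) (x y : X) : ℝ :=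
  (((Finset.range n).sup fun i => nndist (f^[i] x) (f^[i] y) : NNReal) : ℝ)

/-- `A` is `(ε,n)`-separated: distinct points are at `d_n`-distance at least `ε`. -/
def IsSep {X : Type*} [PseudoMetricSpace X] (f : X → X) (ε : ℝ) (n : ℕ) (A : Set X) : Prop :=
  ∀ x ∈ A, ∀ y ∈ A, x ≠ y → ε ≤ dn f n x y

lemma dn_comm {X : Type*} [PseudoMetricSpace X] (f : X → X) (n : ℕ) (x y : X) :
    dn f n x y = dn f n y x := by
  unfold dn; congr 1; apply Finset.sup_congr rfl; intro i _; exact nndist_comm _ _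

lemma dn_self {X : Type*} [PseudoMetricSpace X] (f : X → X) (n : ℕ) (x : X) :
    dn f n x x = 0 := by
  unfold dn
  norm_cast
  simp [Finset.sup_eq_bot_iff]

/-- if `A`, `B` are `(ε,n)`-separated and `A` is optimal, there is an
injection `α : B → A` moving each point by `d_n`-distance `< ε`; it is a bijection
when `|B| = |A|`. -/
theorem exists_injection_to_optimal {X : Type*} [PseudoMetricSpace X] (f : X → X)
    (ε : ℝ) (hε : 0 < ε) (n : ℕ) (A B : Finset X)
    (hA : IsSep f ε n ↑A) (hB : IsSep f ε n ↑B)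
    (hopt : ∀ Y : Finset X, IsSep f ε n ↑Y → Y.card ≤ A.card) :
    ∃ α : {x // x ∈ B} → {a // a ∈ A}, Function.Injective α ∧
      (∀ x : {x // x ∈ B}, dn f n (x : X) ((α x : X)) < ε) ∧
      (B.card = A.card → Function.Bijective α) := by
  classical
  set t : {x // x ∈ B} → Finset {a // a ∈ A} :=
    fun x => A.attach.filter (fun a => dn f n (x : X) (a : X) < ε) with ht
  have hall : ∀ S : Finset {x // x ∈ B}, S.card ≤ (S.biUnion t).card := by
    intro S
    set N : Finset X := (S.biUnion t).image Subtype.val with hN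
    set S' : Finset X := S.image Subtype.val with hS'
    have hNA : N ⊆ A := by
      intro a ha
      simp only [hN, Finset.mem_image] at ha
      obtain ⟨a', _, rfl⟩ := ha
      exact a'.2
    -- disjointness
    have hdisj : Disjoint S' (A \ N) := by
      rw [Finset.disjoint_left]
      intro x hx hx2
      simp only [hS', Finset.mem_image] at hx
      obtain ⟨s, hs, rfl⟩ := hx
      rw [Finset.mem_sdiff] at hx2
      apply hx2.2
      simp only [hN, Finset.mem_image]
      refine ⟨⟨(s : X), hx2.1⟩, ?_, rfl⟩
      rw [Finset.mem_biUnion]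
      exact ⟨s, hs, by simp [ht, dn_self, hε]⟩
    -- Y is separated
    have hsep : IsSep f ε n ↑(S' ∪ (A \ N)) := by
      intro x hx y hy hxy
      simp only [Finset.coe_union, Set.mem_union, Finset.coe_sdiff, Set.mem_diff,
        Finset.mem_coe] at hx hy
      have key : ∀ u v : X, (∃ s ∈ S, (s : X) = u) → v ∈ A → v ∉ N → ε ≤ dn f n u v := by
        intro u v ⟨s, hs, hsu⟩ hvA hvN
        by_contra h
        push_neg at h
        apply hvN
        simp only [hN, Finset.mem_image]
        refine ⟨⟨v, hvA⟩, ?_, rfl⟩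
        rw [Finset.mem_biUnion]
        exact ⟨s, hs, by simp [ht, hsu, h]⟩
      rcases hx with hx | hx <;> rcases hy with hy | hy
      · rw [Finset.mem_image] at hx hy
        obtain ⟨s, hs, rfl⟩ := hx
        obtain ⟨s', hs', rfl⟩ := hy
        exact hB _ s.2 _ s'.2 hxy
      · rw [Finset.mem_image] at hx
        obtain ⟨s, hs, rfl⟩ := hx
        exact key _ _ ⟨s, hs, rfl⟩ hy.1 hy.2
      · rw [Finset.mem_image] at hy
        obtain ⟨s, hs, rfl⟩ := hy
        rw [dn_comm]
        exact key _ _ ⟨s, hs, rfl⟩ hx.1 hx.2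
      · exact hA _ hx.1 _ hy.1 hxy
    have hcard := hopt _ hsep
    rw [Finset.card_union_of_disjoint hdisj, Finset.card_sdiff_of_subset hNA] at hcard
    have h1 : S'.card = S.card := Finset.card_image_of_injective _ Subtype.val_injective
    have h2 : N.card = (S.biUnion t).card :=
      Finset.card_image_of_injective _ Subtype.val_injective
    have h3 : N.card ≤ A.card := Finset.card_le_card hNA
    omega
  obtain ⟨α, hinj, hmem⟩ := (Finset.all_card_le_biUnion_card_iff_existsInjective' t).mp hall
  refine ⟨α, hinj, ?_, ?_⟩
  · intro x
    have := hmem x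
    simp only [ht, Finset.mem_filter] at this
    exact this.2
  · intro hcard
    have : Fintype.card {x // x ∈ B} = Fintype.card {a // a ∈ A} := by
      simpa [Fintype.card_coe] using hcard
    exact (Fintype.bijective_iff_injective_and_card α).mpr ⟨hinj, this⟩
end

section
/- Let f be an interval exchange transformation of [0,1) with m intervals: f(x) = x + c_i for x ∈ [a_i, a_{i+1}), i = 0,…,m−1, with c_i ≠ c_{i+1}. Assume f is injective, the set D = ⋃_{k≥0} f^{-k}(S) of preimages of the discontinuity set S = {a_1,…,a_{m−1}} is dense in [0,1), and D contains no periodic points of f. Then there exists ε₀ > 0 such that for every 0 < ε ≤ ε₀, f is uniformly ε-expansive: there exist δ_n → 0 such that d_n(x,y) ≤ ε implies d(x,y) ≤ δ_n. -/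
open Filter Topology

/-- an injective interval exchange transformation whose set `D` of
preimages of discontinuities is dense in `[0,1)` and contains no periodic points is
uniformly `ε`-expansive (on `[0,1) ∖ D`) for all sufficiently small `ε > 0`. -/
theorem iet_uniformly_expansive
    (m : ℕ) (hm : 1 ≤ m) (a c : ℕ → ℝ) (f : ℝ → ℝ)
    (ha0 : a 0 = 0) (ham : a m = 1) (haMono : ∀ i < m, a i < a (i + 1))
    (hc : ∀ i, i + 1 < m → c i ≠ c (i + 1))
    (hfx : ∀ i < m, ∀ x ∈ Set.Ico (a i) (a (i + 1)), f x = x + c i)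
    (hmaps : Set.MapsTo f (Set.Ico (0 : ℝ) 1) (Set.Ico (0 : ℝ) 1))
    (hinj : Set.InjOn f (Set.Ico (0 : ℝ) 1))
    (S : Set ℝ) (hS : S = {x | ∃ i, 1 ≤ i ∧ i ≤ m - 1 ∧ x = a i})
    (D : Set ℝ) (hD : D = ⋃ k : ℕ, (f^[k]) ⁻¹' S ∩ Set.Ico (0 : ℝ) 1)
    (hdense : Set.Ico (0 : ℝ) 1 ⊆ closure D)
    (hper : ∀ x ∈ D, ∀ k, 1 ≤ k → f^[k] x ≠ x) :
    ∃ ε₀ > (0 : ℝ), ∀ ε : ℝ, 0 < ε → ε ≤ ε₀ →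
      ∃ δ : ℕ → ℝ, Tendsto δ atTop (𝓝 0) ∧
        ∀ n, 1 ≤ n → ∀ x ∈ Set.Ico (0 : ℝ) 1 \ D, ∀ y ∈ Set.Ico (0 : ℝ) 1 \ D,
          dn f n x y ≤ ε → dist x y ≤ δ n := by
  classical
  -- dispose of the degenerate case m = 1
  rcases eq_or_lt_of_le hm with hm1 | hm2
  · exfalso
    have hS0 : S = ∅ := by
      rw [hS]; ext z; simp only [Set.mem_setOf_eq, Set.mem_empty_iff_false, iff_false]
      rintro ⟨i, h1, h2, -⟩; omega
    have hD0 : D = ∅ := by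
      rw [hD, hS0]; simp
    have h0 : (0 : ℝ) ∈ Set.Ico (0 : ℝ) 1 := ⟨le_refl _, one_pos⟩
    have := hdense h0
    rw [hD0, closure_empty] at this
    exact this
  -- now 2 ≤ m
  have hm2' : 2 ≤ m := hm2
  -- strict monotonicity of a
  have haSM : ∀ i j, i < j → j ≤ m → a i < a j := by
    intro i j hij hjm
    induction j with
    | zero => omega
    | succ j ih =>
      rcases Nat.lt_succ_iff_lt_or_eq.mp hij with h | h
      · exact lt_trans (ih h (by omega)) (haMono j (by omega))
      · subst h; exact haMono i (by omega)
  -- minimal interval length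
  have hne : (Finset.range m).Nonempty := ⟨0, Finset.mem_range.mpr (by omega)⟩
  have hne' : (Finset.range (m - 1)).Nonempty := ⟨0, Finset.mem_range.mpr (by omega)⟩
  set L : ℝ := (Finset.range m).inf' hne (fun i => a (i + 1) - a i) with hLdef
  set C : ℝ := (Finset.range (m - 1)).inf' hne' (fun i => |c (i + 1) - c i|) with hCdef
  have hLpos : 0 < L := by
    rw [hLdef, Finset.lt_inf'_iff]
    intro i hi
    exact sub_pos.mpr (haMono i (Finset.mem_range.mp hi))
  have hCpos : 0 < C := by
    rw [hCdef, Finset.lt_inf'_iff]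
    intro i hi
    have : i + 1 < m := by have := Finset.mem_range.mp hi; omega
    exact abs_pos.mpr (sub_ne_zero.mpr (Ne.symm (hc i this)))
  have hLle : ∀ i, i < m → L ≤ a (i + 1) - a i := fun i hi =>
    Finset.inf'_le _ (Finset.mem_range.mpr hi)
  have hCle : ∀ i, i + 1 < m → C ≤ |c (i + 1) - c i| := fun i hi =>
    Finset.inf'_le _ (Finset.mem_range.mpr (by omega))
  set ε₀ : ℝ := min L C / 3 with hε₀def
  have hε₀pos : 0 < ε₀ := by
    rw [hε₀def]; have := lt_min hLpos hCpos; positivity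
  have hε₀L : ε₀ < L := by
    rw [hε₀def]
    have h1 : min L C ≤ L := min_le_left _ _
    linarith
  have hε₀C : C - ε₀ > ε₀ := by
    rw [hε₀def]
    have h1 : min L C ≤ C := min_le_right _ _
    linarith
  -- locating a point in its interval
  have hloc : ∀ u ∈ Set.Ico (0 : ℝ) 1, ∃ j, j < m ∧ a j ≤ u ∧ u < a (j + 1) := by
    intro u hu
    set T : Finset ℕ := (Finset.range m).filter (fun i => a i ≤ u) with hTdef
    have hT : T.Nonempty := by
      refine ⟨0, ?_⟩
      rw [hTdef, Finset.mem_filter, Finset.mem_range]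
      exact ⟨by omega, by rw [ha0]; exact hu.1⟩
    set j := T.max' hT with hjdef
    have hjT : j ∈ T := T.max'_mem hT
    rw [hTdef, Finset.mem_filter, Finset.mem_range] at hjT
    refine ⟨j, hjT.1, hjT.2, ?_⟩
    by_contra h
    push_neg at h
    have hj1m : j + 1 < m := by
      by_contra h2
      have : j + 1 = m := by omega
      rw [this, ham] at h
      exact absurd hu.2 (not_lt.mpr h)
    have hmem : j + 1 ∈ T := by
      rw [hTdef, Finset.mem_filter, Finset.mem_range]
      exact ⟨hj1m, h⟩
    have := T.le_max' _ hmem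
    omega
  -- key one-step lemma
  have hA : ∀ u v : ℝ, u ∈ Set.Ico (0:ℝ) 1 → v ∈ Set.Ico (0:ℝ) 1 → u ∉ S → v ∉ S →
      u ≤ v → v - u ≤ ε₀ → |f v - f u| ≤ ε₀ →
      ∃ j, j < m ∧ Set.Icc u v ⊆ Set.Ico (a j) (a (j + 1)) := by
    intro u v hu hv huS hvS huv hvu hfuv
    obtain ⟨j, hj, hju, huj⟩ := hloc u hu
    by_cases hcase : v < a (j + 1)
    · exact ⟨j, hj, fun z hz => ⟨le_trans hju hz.1, lt_of_le_of_lt hz.2 hcase⟩⟩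
    · exfalso
      push_neg at hcase
      have hj1m : j + 1 < m := by
        by_contra h
        have hjm : j + 1 = m := by omega
        rw [hjm, ham] at hcase
        exact absurd hv.2 (not_lt.mpr hcase)
      have hav : a (j + 1) < v := by
        rcases lt_or_eq_of_le hcase with h | h
        · exact h
        · exfalso
          apply hvS
          rw [hS]
          exact ⟨j + 1, by omega, by omega, h.symm⟩
      have hva : v < a (j + 2) := by
        have h1 : L ≤ a (j + 1 + 1) - a (j + 1) := hLle (j + 1) hj1m
        have : v ≤ u + ε₀ := by linarith
        calc v ≤ u + ε₀ := this
          _ < a (j + 1) + ε₀ := by linarith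
          _ < a (j + 1) + L := by linarith
          _ ≤ a (j + 2) := by
            have : j + 1 + 1 = j + 2 := by omega
            rw [this] at h1; linarith
      have hfu : f u = u + c j := hfx j hj u ⟨hju, huj⟩
      have hfv : f v = v + c (j + 1) := hfx (j + 1) hj1m v ⟨le_of_lt hav, by
        have : j + 1 + 1 = j + 2 := by omega
        rw [this]; exact hva⟩
      have hClow : C ≤ |c (j + 1) - c j| := hCle j hj1m
      have habs : |c (j + 1) - c j| - (v - u) ≤ |f v - f u| := by
        have h1 : |c (j + 1) - c j| - |f v - f u| ≤ |(c (j + 1) - c j) - (f v - f u)| :=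
          abs_sub_abs_le_abs_sub _ _
        have h2 : |(c (j + 1) - c j) - (f v - f u)| = |u - v| := by
          rw [hfu, hfv]; ring_nf
        have h3 : |u - v| = v - u := by
          rw [abs_sub_comm]; exact abs_of_nonneg (by linarith)
        rw [h2, h3] at h1
        linarith
      have : ε₀ < |f v - f u| := by linarith
      linarith
  -- S-freeness of subintervals of continuity intervals
  have hSfree : ∀ j, j < m → ∀ u v : ℝ, u ∉ S →
      Set.Icc u v ⊆ Set.Ico (a j) (a (j + 1)) → ∀ z ∈ Set.Icc u v, z ∉ S := by
    intro j hj u v huS hsub z hz hzS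
    rw [hS] at hzS
    obtain ⟨i, hi1, hi2, hzi⟩ := hzS
    have him : i < m := by omega
    have hz' := hsub hz
    have hij : i = j := by
      by_contra hne
      rcases lt_or_gt_of_ne hne with h | h
      · have : a i < a j := haSM i j h (le_of_lt hj)
        rw [← hzi] at this
        linarith [hz'.1]
      · have h2 : a (j + 1) ≤ a i := by
          rcases eq_or_lt_of_le (show j + 1 ≤ i by omega) with h' | h'
          · rw [h']
          · exact le_of_lt (haSM (j + 1) i h' (by omega))
        rw [← hzi] at h2
        linarith [hz'.2]
    subst hij
    have huv : u ≤ v := le_trans hz.1 hz.2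
    have hu' := hsub ⟨le_refl u, huv⟩
    have : z = u := by
      have : a i ≤ u := hu'.1
      have : z ≤ u := by rw [hzi]; exact this
      linarith [hz.1]
    apply huS
    rw [hS]
    exact ⟨i, hi1, hi2, by rw [← this, hzi]⟩
  -- iterates preserve [0,1)
  have hit : ∀ k, ∀ w ∈ Set.Ico (0:ℝ) 1, f^[k] w ∈ Set.Ico (0:ℝ) 1 := by
    intro k
    exact fun w hw => (hmaps.iterate k) hw
  -- points outside D never hit S
  have hnotS : ∀ w, w ∈ Set.Ico (0:ℝ) 1 → w ∉ D → ∀ k, f^[k] w ∉ S := by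
    intro w hw hwD k hk
    exact hwD (hD ▸ Set.mem_iUnion.mpr ⟨k, hk, hw⟩)
  -- the gap-length sets
  set Q : ℕ → Set ℝ := fun n => insert (0:ℝ)
    {r | ∃ u v : ℝ, u ∈ Set.Ico (0:ℝ) 1 ∧ v ∈ Set.Ico (0:ℝ) 1 ∧ u ≤ v ∧
      (∀ z ∈ Set.Icc u v, ∀ k, k + 1 < n → f^[k] z ∉ S) ∧ r = v - u} with hQdef
  have hQ0 : ∀ n, (0:ℝ) ∈ Q n := fun n => Set.mem_insert _ _
  have hQbdd : ∀ n, ∀ r ∈ Q n, r ≤ 1 := by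
    intro n r hr
    rcases hr with h | ⟨u, v, hu, hv, huv, -, rfl⟩
    · rw [h]; norm_num
    · have := hu.1; have := hv.2; linarith
  have hbdd : ∀ n, BddAbove (Q n) := fun n => ⟨1, fun r hr => hQbdd n r hr⟩
  -- main estimate
  have main : ∀ n, 1 ≤ n → ∀ x, x ∈ Set.Ico (0:ℝ) 1 → x ∉ D →
      ∀ y, y ∈ Set.Ico (0:ℝ) 1 → y ∉ D → x ≤ y →
      (∀ i, i < n → dist (f^[i] x) (f^[i] y) ≤ ε₀) → y - x ≤ sSup (Q n) := by
    intro n hn x hxI hxD y hyI hyD hxy hterm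
    have hxyε : y - x ≤ ε₀ := by
      have h0 := hterm 0 (by omega)
      simp only [Function.iterate_zero_apply] at h0
      rw [Real.dist_eq, abs_of_nonpos (by linarith : x - y ≤ 0)] at h0
      linarith
    have hxSk : ∀ k, f^[k] x ∉ S := hnotS x hxI hxD
    have hySk : ∀ k, f^[k] y ∉ S := hnotS y hyI hyD
    have key : ∀ k, k + 1 < n → (∀ z ∈ Set.Icc x y, f^[k] z = z + (f^[k] x - x)) →
        (∃ j, j < m ∧ Set.Icc (f^[k] x) (f^[k] y) ⊆ Set.Ico (a j) (a (j + 1))) ∧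
        (∀ z ∈ Set.Icc x y, f^[k + 1] z = z + (f^[k + 1] x - x)) := by
      intro k hk htr
      have hux : f^[k] x ∈ Set.Ico (0:ℝ) 1 := hit k x hxI
      have huy : f^[k] y ∈ Set.Ico (0:ℝ) 1 := hit k y hyI
      have hky : f^[k] y = y + (f^[k] x - x) := htr y ⟨hxy, le_refl y⟩
      have huv : f^[k] x ≤ f^[k] y := by rw [hky]; linarith
      have hfd : |f (f^[k] y) - f (f^[k] x)| ≤ ε₀ := by
        have h1 := hterm (k + 1) hk
        rw [Function.iterate_succ_apply' f k x, Function.iterate_succ_apply' f k y,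
          Real.dist_eq, abs_sub_comm] at h1
        exact h1
      obtain ⟨j, hj, hjsub⟩ := hA (f^[k] x) (f^[k] y) hux huy (hxSk k) (hySk k) huv
        (by rw [hky]; linarith) hfd
      refine ⟨⟨j, hj, hjsub⟩, ?_⟩
      intro z hz
      have hzv : f^[k] z ∈ Set.Icc (f^[k] x) (f^[k] y) := by
        rw [htr z hz, hky]
        constructor
        · linarith [hz.1]
        · linarith [hz.2]
      have hfz : f (f^[k] z) = f^[k] z + c j := hfx j hj _ (hjsub hzv)
      have hfxk : f (f^[k] x) = f^[k] x + c j := hfx j hj _ (hjsub ⟨le_refl _, huv⟩)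
      rw [Function.iterate_succ_apply' f k z, Function.iterate_succ_apply' f k x,
        hfz, hfxk, htr z hz]
      ring
    have htrans : ∀ k, k < n → ∀ z ∈ Set.Icc x y, f^[k] z = z + (f^[k] x - x) := by
      intro k
      induction k with
      | zero => intro _ z _; simp
      | succ k ih =>
        intro hk
        exact (key k hk (ih (by omega))).2
    have hfree : ∀ z ∈ Set.Icc x y, ∀ k, k + 1 < n → f^[k] z ∉ S := by
      intro z hz k hk
      obtain ⟨⟨j, hj, hjsub⟩, -⟩ := key k hk (htrans k (by omega))
      have hky : f^[k] y = y + (f^[k] x - x) := htrans k (by omega) y ⟨hxy, le_refl y⟩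
      have hzv : f^[k] z ∈ Set.Icc (f^[k] x) (f^[k] y) := by
        rw [htrans k (by omega) z hz, hky]
        constructor
        · linarith [hz.1]
        · linarith [hz.2]
      exact hSfree j hj _ _ (hxSk k) hjsub _ hzv
    exact le_csSup (hbdd n) (Set.mem_insert_iff.mpr
      (Or.inr ⟨x, y, hxI, hyI, hxy, hfree, rfl⟩))
  -- density claim: gaps shrink
  have claim : ∀ ρ : ℝ, 0 < ρ → ∃ N : ℕ, ∀ n, N ≤ n → ∀ u v : ℝ,
      u ∈ Set.Ico (0:ℝ) 1 → v ∈ Set.Ico (0:ℝ) 1 → u ≤ v →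
      (∀ z ∈ Set.Icc u v, ∀ k, k + 1 < n → f^[k] z ∉ S) → v - u ≤ ρ := by
    intro ρ hρ
    rcases le_or_gt 1 ρ with hρ1 | hρ1
    · exact ⟨0, fun n _ u v hu hv huv _ => by linarith [hu.1, hv.2]⟩
    have hchoice : ∀ j : ℕ, ∃ d : ℝ, ∃ k : ℕ, (j : ℝ) * (ρ / 4) < 1 →
        (d ∈ Set.Ico (0:ℝ) 1 ∧ f^[k] d ∈ S ∧ |d - (j : ℝ) * (ρ / 4)| < ρ / 4) := by
      intro j
      by_cases hj : (j : ℝ) * (ρ / 4) < 1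
      · have htj : (j : ℝ) * (ρ / 4) ∈ Set.Ico (0:ℝ) 1 := ⟨by positivity, hj⟩
        have hcl := hdense htj
        rw [Metric.mem_closure_iff] at hcl
        obtain ⟨d, hdD, hdist⟩ := hcl (ρ / 4) (by positivity)
        rw [hD] at hdD
        obtain ⟨k, hk⟩ := Set.mem_iUnion.mp hdD
        refine ⟨d, k, fun _ => ⟨hk.2, hk.1, ?_⟩⟩
        rw [abs_sub_comm, ← Real.dist_eq]
        exact hdist
      · exact ⟨0, 0, fun h => absurd h hj⟩
    choose dd kk hdk using hchoice
    set M : ℕ := ⌈4 / ρ⌉₊ + 1 with hMdef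
    refine ⟨(Finset.range M).sup kk + 2, ?_⟩
    intro n hn u v hu hv huv hP
    by_contra hlt
    push_neg at hlt
    set w : ℝ := u + ρ / 2 with hwdef
    have hw1 : w < 1 := by
      have : w < v := by rw [hwdef]; linarith
      linarith [hv.2]
    have hw0 : 0 ≤ w := by rw [hwdef]; have := hu.1; positivity
    set j : ℕ := ⌊w / (ρ / 4)⌋₊ with hjdef
    have hρ4 : (0:ℝ) < ρ / 4 := by positivity
    have hjw : (j : ℝ) * (ρ / 4) ≤ w := by
      have h1 : (j : ℝ) ≤ w / (ρ / 4) := Nat.floor_le (by positivity)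
      calc (j : ℝ) * (ρ / 4) ≤ (w / (ρ / 4)) * (ρ / 4) := by nlinarith
        _ = w := by field_simp
    have hwj : w < ((j : ℝ) + 1) * (ρ / 4) := by
      have h1 : w / (ρ / 4) < (j : ℝ) + 1 := Nat.lt_floor_add_one _
      calc w = (w / (ρ / 4)) * (ρ / 4) := by field_simp
        _ < ((j : ℝ) + 1) * (ρ / 4) := by nlinarith
    have hjM : j < M := by
      have h1 : (j : ℝ) ≤ w / (ρ / 4) := Nat.floor_le (by positivity)
      have h2 : w / (ρ / 4) < 1 / (ρ / 4) := by gcongr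
      have h3 : 1 / (ρ / 4) = 4 / ρ := one_div_div ρ 4
      have h4 : (4 : ℝ) / ρ ≤ (⌈4 / ρ⌉₊ : ℝ) := Nat.le_ceil _
      have h5 : (j : ℝ) < (M : ℝ) := by
        rw [hMdef]
        push_cast
        linarith
      exact_mod_cast h5
    have htj1 : (j : ℝ) * (ρ / 4) < 1 := lt_of_le_of_lt hjw hw1
    obtain ⟨hdIco, hdS, hddist⟩ := hdk j htj1
    have habs := abs_lt.mp hddist
    have h1 : u < dd j := by
      have h5 : (j : ℝ) * (ρ / 4) > w - ρ / 4 := by linarith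
      linarith [habs.1, hwdef]
    have h2 : dd j < v := by
      have h5 : dd j < w + ρ / 4 := by linarith [habs.2]
      linarith [hwdef]
    have hkj : kk j + 1 < n := by
      have h4 : kk j ≤ (Finset.range M).sup kk := Finset.le_sup (Finset.mem_range.mpr hjM)
      omega
    exact hP (dd j) ⟨le_of_lt h1, le_of_lt h2⟩ (kk j) hkj hdS
  -- assemble
  refine ⟨ε₀, hε₀pos, ?_⟩
  intro ε hε hεle
  refine ⟨fun n => sSup (Q n), ?_, ?_⟩
  · rw [Metric.tendsto_atTop]
    intro r hr
    obtain ⟨N, hN⟩ := claim (r / 2) (by positivity)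
    refine ⟨N, fun n hn => ?_⟩
    have h1 : sSup (Q n) ≤ r / 2 := by
      apply csSup_le ⟨0, hQ0 n⟩
      intro r' hr'
      rcases hr' with h | ⟨u, v, hu, hv, huv, hprop, rfl⟩
      · rw [h]; positivity
      · exact hN n hn u v hu hv huv hprop
    have h0 : 0 ≤ sSup (Q n) := le_csSup (hbdd n) (hQ0 n)
    rw [Real.dist_eq, sub_zero, abs_of_nonneg h0]
    linarith
  · intro n hn x hx y hy hdn
    have hterm : ∀ i, i < n → dist (f^[i] x) (f^[i] y) ≤ ε₀ := by
      intro i hi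
      have h1 : ((nndist (f^[i] x) (f^[i] y) : NNReal) : ℝ) ≤ dn f n x y :=
        NNReal.coe_le_coe.mpr (Finset.le_sup (f := fun i => nndist (f^[i] x) (f^[i] y)) (Finset.mem_range.mpr hi))
      rw [dist_nndist]
      linarith [hdn, hεle]
    rcases le_total x y with hxy | hxy
    · have h := main n hn x hx.1 hx.2 y hy.1 hy.2 hxy hterm
      rw [Real.dist_eq, abs_of_nonpos (by linarith : x - y ≤ 0)]
      linarith
    · have hterm' : ∀ i, i < n → dist (f^[i] y) (f^[i] x) ≤ ε₀ := by
        intro i hi; rw [dist_comm]; exact hterm i hi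
      have h := main n hn y hy.1 hy.2 x hx.1 hx.2 hxy hterm'
      rw [Real.dist_eq, abs_of_nonneg (by linarith : 0 ≤ x - y)]
      linarith
end

section
/- Let f be uniformly ε-expansive on a compact metric space X, with δ_n → 0 witnessing expansivity. Let A_n and B_n be optimal (ε,n)-separated sets and φ : X → ℝ continuous. Then |(1/C_{ε,n}) Σ_{x∈A_n} φ(x) − (1/C_{ε,n}) Σ_{x∈B_n} φ(x)| ≤ ω_{δ_n}(φ), where ω_δ(φ) = sup{|φ(x)−φ(y)| : d(x,y) ≤ δ}. In particular, the difference of the averages tends to 0 as n → ∞. -/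
open Filter Topology

/-- The modulus of continuity `ω_δ(φ) = sup {|φ(x) − φ(y)| : d(x,y) ≤ δ}`. -/
noncomputable def modCont {X : Type*} [PseudoMetricSpace X] (φ : X → ℝ) (δ : ℝ) : ℝ :=
  sSup {t : ℝ | ∃ x y : X, dist x y ≤ δ ∧ t = |φ x - φ y|}

lemma exists_inj {X : Type*} [MetricSpace X] (f : X → X) (ε : ℝ) (hε : 0 < ε) (n : ℕ)
    (A B : Finset X)
    (hA : IsSep f ε n ↑A)
    (hB : IsSep f ε n ↑B ∧ ∀ Y : Finset X, IsSep f ε n ↑Y → Y.card ≤ B.card) :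
    ∃ g : ↥A → X, Function.Injective g ∧ ∀ a : ↥A, g a ∈ B ∧ dn f n ↑a (g a) < ε := by
  classical
  set t : ↥A → Finset X := fun a => B.filter (fun b => dn f n ↑a b < ε) with ht
  have hall : ∀ s : Finset ↥A, s.card ≤ (s.biUnion t).card := by
    intro s
    set N := s.biUnion t with hN
    set S' := s.image (Subtype.val) with hS'
    have hS'card : S'.card = s.card := Finset.card_image_of_injective _ Subtype.val_injective
    have hNB : N ⊆ B := Finset.biUnion_subset.mpr fun a _ => Finset.filter_subset _ _
    have hS'A : ∀ x ∈ S', x ∈ A := by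
      intro x hx
      obtain ⟨a, _, rfl⟩ := Finset.mem_image.mp hx
      exact a.2
    have hdisj : Disjoint S' (B \ N) := by
      rw [Finset.disjoint_left]
      intro x hx hx'
      obtain ⟨a, ha, rfl⟩ := Finset.mem_image.mp hx
      have : (a : X) ∈ N := Finset.mem_biUnion.mpr ⟨a, ha,
        Finset.mem_filter.mpr ⟨(Finset.mem_sdiff.mp hx').1, by rw [dn_self]; exact hε⟩⟩
      exact (Finset.mem_sdiff.mp hx').2 this
    have hsep : IsSep f ε n ↑(S' ∪ (B \ N)) := by
      intro x hx y hy hxy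
      simp only [Finset.coe_union, Set.mem_union, Finset.mem_coe, Finset.mem_union] at hx hy
      rcases hx with hx | hx <;> rcases hy with hy | hy
      · exact hA x (hS'A x hx) y (hS'A y hy) hxy
      · -- x ∈ S', y ∈ B \ N
        obtain ⟨a, ha, rfl⟩ := Finset.mem_image.mp hx
        by_contra h
        push_neg at h
        have : y ∈ N := Finset.mem_biUnion.mpr ⟨a, ha,
          Finset.mem_filter.mpr ⟨(Finset.mem_sdiff.mp hy).1, h⟩⟩
        exact (Finset.mem_sdiff.mp hy).2 this
      · obtain ⟨a, ha, rfl⟩ := Finset.mem_image.mp hy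
        by_contra h
        push_neg at h
        rw [dn_comm] at h
        have : x ∈ N := Finset.mem_biUnion.mpr ⟨a, ha,
          Finset.mem_filter.mpr ⟨(Finset.mem_sdiff.mp hx).1, h⟩⟩
        exact (Finset.mem_sdiff.mp hx).2 this
      · exact hB.1 x (Finset.mem_sdiff.mp hx).1 y (Finset.mem_sdiff.mp hy).1 hxy
    have hcard := hB.2 _ hsep
    rw [Finset.card_union_of_disjoint hdisj, hS'card, Finset.card_sdiff_of_subset hNB] at hcard
    have hNle : N.card ≤ B.card := Finset.card_le_card hNB
    omega
  obtain ⟨g, hginj, hg⟩ := (Finset.all_card_le_biUnion_card_iff_exists_injective t).mp hall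
  refine ⟨g, hginj, fun a => ?_⟩
  have := hg a
  rw [ht, Finset.mem_filter] at this
  exact this


/-- for a uniformly ε-expansive map on a compact metric space, the
averages of a continuous `φ` over any two optimal `(ε,n)`-separated sets differ by at
most `ω_{δ_n}(φ)`; in particular the difference of the averages tends to `0`. -/
theorem avg_over_optimal_sets {X : Type*} [MetricSpace X] [CompactSpace X]
    (f : X → X) (ε : ℝ) (hε : 0 < ε)
    (δ : ℕ → ℝ) (hδ0 : ∀ n, 0 ≤ δ n) (hδ : Tendsto δ atTop (𝓝 0))
    (hexp : ∀ n, 1 ≤ n → ∀ x y : X, dn f n x y ≤ ε → dist x y ≤ δ n)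
    (A B : ℕ → Finset X)
    (hA : ∀ n, IsSep f ε n ↑(A n) ∧ ∀ Y : Finset X, IsSep f ε n ↑Y → Y.card ≤ (A n).card)
    (hB : ∀ n, IsSep f ε n ↑(B n) ∧ ∀ Y : Finset X, IsSep f ε n ↑Y → Y.card ≤ (B n).card)
    (φ : X → ℝ) (hφ : Continuous φ) :
    (∀ n, 1 ≤ n →
      |(∑ x ∈ A n, φ x) / ((A n).card : ℝ) - (∑ x ∈ B n, φ x) / ((B n).card : ℝ)|
        ≤ modCont φ (δ n)) ∧
    Tendsto (fun n => (∑ x ∈ A n, φ x) / ((A n).card : ℝ)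
        - (∑ x ∈ B n, φ x) / ((B n).card : ℝ)) atTop (𝓝 0) := by
  classical
  rcases isEmpty_or_nonempty X with hX | hX
  · have hAe : ∀ n, A n = ∅ := fun n => Finset.eq_empty_of_isEmpty _
    have hBe : ∀ n, B n = ∅ := fun n => Finset.eq_empty_of_isEmpty _
    have hm : ∀ n, modCont φ (δ n) = 0 := by
      intro n
      have : {t : ℝ | ∃ x y : X, dist x y ≤ δ n ∧ t = |φ x - φ y|} = ∅ := by
        ext t; simp
      rw [modCont, this, Real.sSup_empty]
    constructor
    · intro n hn
      simp [hAe, hBe, hm n]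
    · simp only [hAe, hBe]
      simpa using tendsto_const_nhds (x := (0:ℝ)) (f := atTop)
  -- nonempty case
  obtain ⟨C, hC⟩ : ∃ C, ∀ x : X, ‖φ x‖ ≤ C :=
    isCompact_univ.exists_bound_of_continuousOn hφ.continuousOn |>.imp
      fun C hC x => hC x (Set.mem_univ x)
  have hbdd : ∀ d : ℝ, BddAbove {t : ℝ | ∃ x y : X, dist x y ≤ d ∧ t = |φ x - φ y|} := by
    intro d
    refine ⟨C + C, fun t ht => ?_⟩
    obtain ⟨x, y, _, rfl⟩ := ht
    calc |φ x - φ y| ≤ |φ x| + |φ y| := abs_sub _ _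
      _ ≤ C + C := add_le_add (hC x) (hC y)
  have hpos : ∀ n, 0 < ((A n).card : ℝ) ∧ 0 < ((B n).card : ℝ) := by
    intro n
    obtain ⟨x⟩ := hX
    have hsing : IsSep f ε n ↑({x} : Finset X) := by
      intro a ha b hb hab
      simp only [Finset.coe_singleton, Set.mem_singleton_iff] at ha hb
      exact absurd (ha.trans hb.symm) hab
    have h1 := (hA n).2 _ hsing
    have h2 := (hB n).2 _ hsing
    simp only [Finset.card_singleton] at h1 h2
    constructor <;> [exact_mod_cast Nat.lt_of_lt_of_le Nat.zero_lt_one h1;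
      exact_mod_cast Nat.lt_of_lt_of_le Nat.zero_lt_one h2]
  have hcard : ∀ n, (A n).card = (B n).card :=
    fun n => le_antisymm ((hB n).2 _ (hA n).1) ((hA n).2 _ (hB n).1)
  have key : ∀ n, 1 ≤ n →
      |(∑ x ∈ A n, φ x) / ((A n).card : ℝ) - (∑ x ∈ B n, φ x) / ((B n).card : ℝ)|
        ≤ modCont φ (δ n) := by
    intro n hn
    obtain ⟨g, hginj, hg⟩ := exists_inj f ε hε n (A n) (B n) (hA n).1 (hB n)
    have himg : (A n).attach.image (fun a => g a) = B n := by
      apply Finset.eq_of_subset_of_card_le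
      · intro b hb
        obtain ⟨a, _, rfl⟩ := Finset.mem_image.mp hb
        exact (hg a).1
      · rw [Finset.card_image_of_injective _ hginj, Finset.card_attach, hcard n]
    have hsumB : (∑ x ∈ B n, φ x) = ∑ a ∈ (A n).attach, φ (g a) := by
      rw [← himg, Finset.sum_image (fun a _ b _ h => hginj h)]
    have hsumA : (∑ x ∈ A n, φ x) = ∑ a ∈ (A n).attach, φ ↑a :=
      (Finset.sum_attach _ _).symm
    have hcA := (hpos n).1
    rw [hsumA, hsumB, ← hcard n, div_sub_div_same, ← Finset.sum_sub_distrib, abs_div,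
      abs_of_pos hcA, div_le_iff₀ hcA]
    calc |∑ a ∈ (A n).attach, (φ ↑a - φ (g a))|
        ≤ ∑ a ∈ (A n).attach, |φ ↑a - φ (g a)| := Finset.abs_sum_le_sum_abs _ _
      _ ≤ ∑ _a ∈ (A n).attach, modCont φ (δ n) := by
          apply Finset.sum_le_sum
          intro a _
          apply le_csSup (hbdd (δ n))
          exact ⟨↑a, g a, hexp n hn _ _ (le_of_lt (hg a).2), rfl⟩
      _ = modCont φ (δ n) * ((A n).card : ℝ) := by
          rw [Finset.sum_const, Finset.card_attach, nsmul_eq_mul, mul_comm]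
  refine ⟨key, ?_⟩
  have hmod0 : ∀ n, 0 ≤ modCont φ (δ n) := by
    intro n
    obtain ⟨x⟩ := hX
    apply le_csSup (hbdd (δ n))
    exact ⟨x, x, by simpa using hδ0 n, by simp⟩
  have hmodt : Tendsto (fun n => modCont φ (δ n)) atTop (𝓝 0) := by
    rw [NormedAddCommGroup.tendsto_nhds_zero]
    intro η hη
    obtain ⟨d0, hd0, hUC⟩ := Metric.uniformContinuous_iff.mp
      (CompactSpace.uniformContinuous_of_continuous hφ) (η/2) (by positivity)
    filter_upwards [hδ.eventually_lt_const hd0] with n hn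
    have : modCont φ (δ n) ≤ η/2 := by
      apply Real.sSup_le
      · rintro t ⟨x, y, hxy, rfl⟩
        have := hUC (lt_of_le_of_lt hxy hn)
        rw [Real.dist_eq] at this
        exact this.le
      · positivity
    calc ‖modCont φ (δ n)‖ = modCont φ (δ n) := abs_of_nonneg (hmod0 n)
      _ ≤ η/2 := this
      _ < η := by linarith
  apply squeeze_zero_norm' _ hmodt
  filter_upwards [eventually_ge_atTop 1] with n hn
  exact key n hn
end
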